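/- arXiv:1105.5177 — 3 statements merged into one kernel-verified Lean document; each statement's English description precedes it below -/
import Mathlib

section
/- If μ ≥ W/m, B ≤ μ, and A ≤ (W − B)/m with m ≥ 1, then A + B ≤ (2 − 1/m)·μ. -/
/-- List-scheduling bound: A + B ≤ (2 - 1/m) μ. -/
theorem stmt_1 (m : ℕ) (hm : 1 ≤ m) (μ W A B : ℝ)
    (hμ : 0 ≤ μ) (hW : 0 ≤ W) (hA : 0 ≤ A) (hB : 0 ≤ B)
    (h1 : W / m ≤ μ) (h2 : B ≤ μ) (h3 : A ≤ (W - B) / m) :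
    A + B ≤ (2 - 1 / m) * μ := by
  have hm' : (0:ℝ) < m := by exact_mod_cast hm
  rw [div_le_iff₀ hm'] at h1
  rw [le_div_iff₀ hm'] at h3
  have hm1 : (1:ℝ) ≤ m := by exact_mod_cast hm
  have key : (2 - 1 / m) * μ = (2 * μ * m - μ) / m := by field_simp
  rw [key, le_div_iff₀ hm']
  nlinarith [mul_le_mul_of_nonneg_left h2 (by linarith : (0:ℝ) ≤ (m:ℝ) - 1)]
end

section
/- Let ρ ≥ 1 and β = (2+2ρ)/(1+2ρ). If t_j ≥ t_i + d_i + c/2, c ≤ d_i/ρ, and t_i' ≤ β·t_i, then t_i' + d_i + c ≤ β·t_j. -/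
/-- Key inductive step of the rounding analysis: communication-delay case. -/
theorem stmt_2 (ρ ti tj di c ti' : ℝ)
    (hρ : 1 ≤ ρ) (hti : 0 ≤ ti) (htj : 0 ≤ tj) (hdi : 0 ≤ di)
    (hc : 0 ≤ c) (hti' : 0 ≤ ti')
    (h1 : ti + di + c / 2 ≤ tj) (h2 : c ≤ di / ρ)
    (h3 : ti' ≤ (2 + 2 * ρ) / (1 + 2 * ρ) * ti) :
    ti' + di + c ≤ (2 + 2 * ρ) / (1 + 2 * ρ) * tj := by
  have hρ0 : (0:ℝ) < ρ := by linarith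
  have hpos : (0:ℝ) < 1 + 2 * ρ := by linarith
  have h2' : c * ρ ≤ di := by
    linarith [(le_div_iff₀ hρ0).mp h2]
  rw [div_mul_eq_mul_div, le_div_iff₀ hpos] at h3 ⊢
  nlinarith [mul_le_mul_of_nonneg_right h1 (le_of_lt hpos)]
end

section
/- Let G be a finite DAG with nonnegative vertex durations d and edge delays c, and let x̂ : E → {0,1} satisfy: for every edge (i,j), either x̂(i,j)=1, or the fractional solution satisfies t_j ≥ t_i + d_i + c(i,j)/2; and if x̂(i,j)=1 then t_j ≥ t_i + d_i. Assume c(i,j) ≤ d_i/ρ with ρ ≥ 1 and set β = (2+2ρ)/(1+2ρ). Define s recursively on a topological order by s_j = 0 if j is a source, s_j = s_i + d_i if x̂(i,j) = 1 for some i→j, and s_j = max over i→j of (s_i + d_i + c(i,j)) otherwise. Then s_j ≤ β·t_j for all j. -/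
/-- Main approximation claim of the rounding algorithm for small
communication delays: the rounded start times satisfy `s j ≤ β * t j`. -/
theorem stmt_11 {V : Type*} [Fintype V] (edge : V → V → Prop)
    (hacyc : ∀ v, ¬ Relation.TransGen edge v v)
    (dur : V → ℝ) (del : V → V → ℝ) (t s : V → ℝ) (x' : V → V → Bool)
    (ρ : ℝ) (hρ : 1 ≤ ρ)
    (hdur : ∀ v, 0 ≤ dur v) (hdel : ∀ i j, edge i j → 0 ≤ del i j)
    (ht : ∀ v, 0 ≤ t v)
    (hdelsmall : ∀ i j, edge i j → del i j ≤ dur i / ρ)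
    (hone : ∀ j i i', edge i j → edge i' j → x' i j = true → x' i' j = true → i = i')
    (hfrac1 : ∀ i j, edge i j → x' i j = true → t i + dur i ≤ t j)
    (hfrac0 : ∀ i j, edge i j → x' i j = false → t i + dur i + del i j / 2 ≤ t j)
    (hs_src : ∀ j, (¬ ∃ i, edge i j) → s j = 0)
    (hs_one : ∀ i j, edge i j → x' i j = true → s j = s i + dur i)
    (hs_max : ∀ j, (∃ i, edge i j) → (∀ i, edge i j → x' i j = false) →
      (∀ i, edge i j → s i + dur i + del i j ≤ s j) ∧
      (∃ i, edge i j ∧ s j = s i + dur i + del i j)) :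
    ∀ j, s j ≤ (2 + 2 * ρ) / (1 + 2 * ρ) * t j := by
  have hden : (0:ℝ) < 1 + 2 * ρ := by linarith
  have hρ0 : (0:ℝ) < ρ := by linarith
  set β : ℝ := (2 + 2 * ρ) / (1 + 2 * ρ) with hβdef
  have hβmul : β * (1 + 2 * ρ) = 2 + 2 * ρ := div_mul_cancel₀ _ (ne_of_gt hden)
  have hβ1 : (1:ℝ) ≤ β := by
    rw [hβdef, le_div_iff₀ hden]; linarith
  have hβ0 : (0:ℝ) ≤ β := by linarith
  have wf : WellFounded (Relation.TransGen edge) := by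
    have h1 : IsIrrefl V (Relation.TransGen edge) := ⟨hacyc⟩
    have h2 : IsTrans V (Relation.TransGen edge) := ⟨fun _ _ _ => Relation.TransGen.trans⟩
    exact Finite.wellFounded_of_trans_of_irrefl _
  intro j
  induction j using wf.induction with
  | _ j ih =>
    by_cases hsrc : ∃ i, edge i j
    · by_cases hx : ∃ i, edge i j ∧ x' i j = true
      · obtain ⟨i, hij, hxi⟩ := hx
        have hsi := ih i (Relation.TransGen.single hij)
        rw [hs_one i j hij hxi]
        have hf := hfrac1 i j hij hxi
        have hβt : β * (t i + dur i) ≤ β * t j := by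
          apply mul_le_mul_of_nonneg_left hf hβ0
        nlinarith [hdur i, ht i]
      · push_neg at hx
        have hall : ∀ i, edge i j → x' i j = false := fun i h => by
          simpa using hx i h
        obtain ⟨-, i, hij, heq⟩ := hs_max j hsrc hall
        have hsi := ih i (Relation.TransGen.single hij)
        have hf := hfrac0 i j hij (hall i hij)
        have hds : ρ * del i j ≤ dur i := by
          have := hdelsmall i j hij
          rw [le_div_iff₀ hρ0] at this
          linarith
        have hd0 := hdel i j hij
        have hβt : β * (t i + dur i + del i j / 2) ≤ β * t j :=
          mul_le_mul_of_nonneg_left hf hβ0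
        have key2 : dur i + del i j ≤ β * (dur i + del i j / 2) := by
          rw [hβdef, div_mul_eq_mul_div, le_div_iff₀ hden]
          nlinarith
        rw [heq]
        nlinarith [mul_le_mul_of_nonneg_left (le_refl (dur i + del i j / 2)) hβ0]
    · rw [hs_src j hsrc]
      nlinarith [ht j]
end
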